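/- arXiv:2402.05754 — 2 statements merged into one kernel-verified Lean document; each statement's English description precedes it below -/
import Mathlib

section
/- Let d ∈ V and let V' = {x ∈ V : Tr(ϑ_d(x)) = 1}. For all pairwise distinct a, b, c ∈ V', the number of pairs {x,y} among {a,b}, {a,c}, {b,c} with ϑ_d(x + y) = ⟨x,y⟩² is odd if and only if Tr(⟨a,b⟩) + Tr(⟨a,c⟩) + Tr(⟨b,c⟩) = 0. (That is, the two-graph associated with the graph NO^∓(2m+1,4) — vertex set V', distinct a,b adjacent iff ϑ_d(a+b) = ⟨a,b⟩² — is the symplectic two-graph 𝒳^±_{4m} determined by the F_2-symplectic form Tr⟨·,·⟩.) -/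
open Finset

noncomputable section

/-- The symplectic bilinear form `⟨u,v⟩ = ∑_{i<m} (u_i v_{m+i} + u_{m+i} v_i)` on `F^{2m}`,
`F = GF(4)`. -/
def symp (m : ℕ) (u v : Fin (2*m) → GaloisField 2 2) : GaloisField 2 2 :=
  ∑ i : Fin m, (u ⟨i.1, by omega⟩ * v ⟨m + i.1, by omega⟩ +
    u ⟨m + i.1, by omega⟩ * v ⟨i.1, by omega⟩)

/-- The quadratic form `ϑ_0(u) = ∑_{i<m} u_i u_{m+i}`. -/
def th0 (m : ℕ) (u : Fin (2*m) → GaloisField 2 2) : GaloisField 2 2 :=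
  ∑ i : Fin m, u ⟨i.1, by omega⟩ * u ⟨m + i.1, by omega⟩

/-- The quadratic form `ϑ_a(u) = ϑ_0(u) + ⟨a,u⟩²`. -/
def th (m : ℕ) (a u : Fin (2*m) → GaloisField 2 2) : GaloisField 2 2 :=
  th0 m u + (symp m a u)^2

/-- The absolute trace of `GF(4)`, `Tr(x) = x + x²`. -/
def tr4 (x : GaloisField 2 2) : GaloisField 2 2 := x + x^2

end

lemma pow4 (x : GaloisField 2 2) : x ^ 4 = x := by
  letI : Fintype (GaloisField 2 2) := Fintype.ofFinite _
  have h := FiniteField.pow_card x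
  have hc : Fintype.card (GaloisField 2 2) = 4 := by
    rw [← Nat.card_eq_fintype_card, GaloisField.card 2 2 (by norm_num)]; norm_num
  rwa [hc] at h

lemma tr01 (x : GaloisField 2 2) : tr4 x = 0 ∨ tr4 x = 1 := by
  have hsq : tr4 x ^ 2 = tr4 x := by
    have : (x + x^2)^2 = x^2 + x^4 := by
      rw [CharTwo.add_sq]; ring
    rw [tr4, this, pow4]; ring
  have h0 : tr4 x * (tr4 x - 1) = 0 := by
    rw [mul_sub, mul_one, ← sq, hsq, sub_self]
  rcases mul_eq_zero.mp h0 with h | h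
  · exact Or.inl h
  · exact Or.inr (by linear_combination h)

lemma symp_add (m : ℕ) (d x y : Fin (2*m) → GaloisField 2 2) :
    symp m d (x + y) = symp m d x + symp m d y := by
  simp only [symp, Pi.add_apply, ← Finset.sum_add_distrib]
  exact Finset.sum_congr rfl fun i _ => by ring

lemma th_add (m : ℕ) (d x y : Fin (2*m) → GaloisField 2 2) :
    th m d (x + y) = th m d x + th m d y + symp m x y := by
  have h0 : th0 m (x + y) = th0 m x + th0 m y + symp m x y := by
    simp only [th0, symp, Pi.add_apply, ← Finset.sum_add_distrib]
    exact Finset.sum_congr rfl fun i _ => by ring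
  rw [th, h0, symp_add, CharTwo.add_sq, th, th]; ring

lemma adj_iff (m : ℕ) (d x y : Fin (2*m) → GaloisField 2 2) :
    (th m d (x + y) = (symp m x y)^2) ↔ th m d x + th m d y = tr4 (symp m x y) := by
  rw [th_add, tr4]
  constructor
  · intro h; linear_combination h - CharTwo.add_self_eq_zero (symp m x y)
  · intro h; linear_combination h + CharTwo.add_self_eq_zero (symp m x y)

lemma sum01 (x y : GaloisField 2 2) (hx : tr4 x = 1) (hy : tr4 y = 1) :
    x + y = 0 ∨ x + y = 1 := by
  have htwo : (2 : GaloisField 2 2) = 0 := CharTwo.two_eq_zero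
  have h : tr4 (x + y) = 0 := by
    rw [tr4] at hx hy ⊢
    linear_combination hx + hy + (1 + x*y)*htwo
  have hsq : (x+y)^2 = x + y := by
    have h0 : tr4 (x+y) = (x+y) + (x+y)^2 := rfl
    linear_combination h - h0 - CharTwo.add_self_eq_zero (x+y)
  have h0 : (x+y) * ((x+y) - 1) = 0 := by
    rw [mul_sub, mul_one, ← sq, hsq, sub_self]
  rcases mul_eq_zero.mp h0 with h | h
  · exact Or.inl h
  · exact Or.inr (by linear_combination h)

open scoped Classical in
/-- The two-graph associated with `NO^∓(2m+1,4)` (vertices `{x : Tr(ϑ_d(x)) = 1}`, distinct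
`a,b` adjacent iff `ϑ_d(a+b) = ⟨a,b⟩²`) is the symplectic two-graph determined by the
`F_2`-symplectic form `Tr⟨·,·⟩`: a triple of distinct vertices spans an odd number of edges
iff `Tr⟨a,b⟩ + Tr⟨a,c⟩ + Tr⟨b,c⟩ = 0`. -/
theorem stmt_13 (m : ℕ) (hm : 1 ≤ m) (d : Fin (2*m) → GaloisField 2 2)
    (a b c : Fin (2*m) → GaloisField 2 2)
    (ha : tr4 (th m d a) = 1) (hb : tr4 (th m d b) = 1) (hc : tr4 (th m d c) = 1)
    (hab : a ≠ b) (hac : a ≠ c) (hbc : b ≠ c) :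
    Odd ((if th m d (a + b) = (symp m a b)^2 then 1 else 0)
        + (if th m d (a + c) = (symp m a c)^2 then 1 else 0)
        + (if th m d (b + c) = (symp m b c)^2 then 1 else 0) : ℕ)
    ↔ tr4 (symp m a b) + tr4 (symp m a c) + tr4 (symp m b c) = 0 := by
  rw [adj_iff, adj_iff, adj_iff]
  set sa := th m d a with hsa
  set sb := th m d b with hsb
  set sc := th m d c with hsc
  have htwo : (2 : GaloisField 2 2) = 0 := CharTwo.two_eq_zero
  have h01 : (0:GaloisField 2 2) ≠ 1 := zero_ne_one
  have h2 : (1:GaloisField 2 2) + 1 = 0 := CharTwo.add_self_eq_zero 1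
  have h3 : sb + sc = (sa + sb) + (sa + sc) := by linear_combination - sa * htwo
  rw [h3]
  rcases sum01 sa sb ha hb with h1 | h1 <;>
  rcases sum01 sa sc ha hc with h2' | h2' <;>
  rcases tr01 (symp m a b) with t1 | t1 <;>
  rcases tr01 (symp m a c) with t2 | t2 <;>
  rcases tr01 (symp m b c) with t3 | t3 <;>
  rw [h1, h2', t1, t2, t3] <;>
  simp [h2, h01, h01.symm] <;>
  decide
end

section
/- Let d ∈ V, set ε = +1 if Tr(ϑ_0(d)) = 0 and ε = −1 if Tr(ϑ_0(d)) = 1, let λ ∈ F satisfy λ² + λ + 1 = 0, let V' = {x ∈ V : Tr(ϑ_d(x)) = 1}, and let A = {a ∈ V' : ϑ_d(a) = λ} and B = {a ∈ V' : ϑ_d(a) = λ + 1}. Then A and B partition V', |A| = |B| = 2^{4m−2} − ε·2^{2m−2}, and in the graph on V' with distinct a, b adjacent iff Tr(⟨a,b⟩) = 0, every vertex of A has exactly 2^{4m−3} − ε·2^{2m−2} − 1 neighbors in A (and likewise every vertex of B has exactly that many neighbors in B). (These are the switching sets of the Seidel switching between NO^±(4m,2) and NO^∓(2m+1,4): they have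 size v/2 and are regular of degree k − μ.) -/
open Finset

/-!
Write `χ x = (-1)^{Tr x}`. Counting with characters, `4 · #{ϑ_d = μ}` and
`4 · ∑_{ϑ_d x = μ} χ ⟨a, x⟩` are combinations over `c ∈ F` of the sums
`∑_x χ (c ϑ_d(x) + ⟨a, x⟩)`. Since `Tr (c s²) = Tr (c² s)`, the argument has the same trace
as `c ϑ_0(x) + ⟨c² d + a, x⟩`, and completing the square reduces the sum to the Gauss sum
`∑_x χ (c ϑ_0(x)) = 4^m`; altogether it equals `4^m χ(ϑ_0 d) χ(c² ϑ_d a)` for `c ≠ 0`.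
Taking `a = 0` gives the size of the level set `ϑ_d = μ`; taking `a` in the level set gives the
number of its points `x` with `Tr ⟨a, x⟩ = 0`, i.e. the degree.
-/

open scoped Classical

local notation "F" => GaloisField 2 2

noncomputable instance : Fintype F := Fintype.ofFinite _

theorem AddChar.map_sum_eq_prod {ι A M : Type*} [AddCommMonoid A] [CommMonoid M]
    (ψ : AddChar A M) (s : Finset ι) (f : ι → A) :
    ψ (∑ i ∈ s, f i) = ∏ i ∈ s, ψ (f i) :=
  map_prod ψ.toMonoidHom (fun i => Multiplicative.ofAdd (f i)) s

namespace GaloisField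

theorem card_two_two : Fintype.card F = 4 := by
  rw [Fintype.card_eq_nat_card, GaloisField.card 2 2 two_ne_zero]; rfl

theorem pow_four_two_two (x : F) : x ^ 4 = x := card_two_two ▸ FiniteField.pow_card x

theorem pow_three_two_two_of_ne_zero {c : F} (hc : c ≠ 0) : c ^ 3 = 1 :=
  mul_right_cancel₀ hc (by rw [← pow_succ, pow_four_two_two, one_mul])

end GaloisField

open GaloisField

theorem tr4_add (x y : F) : tr4 (x + y) = tr4 x + tr4 y := by
  unfold tr4; rw [CharTwo.add_sq]; ring

theorem tr4_sq (x : F) : tr4 (x ^ 2) = tr4 x := by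
  unfold tr4; linear_combination pow_four_two_two x

theorem tr4_mul_sq (c s : F) : tr4 (c * s ^ 2) = tr4 (c ^ 2 * s) := by
  rw [← tr4_sq (c * s ^ 2)]
  congr 1
  linear_combination c ^ 2 * pow_four_two_two s

theorem tr4_eq_zero_or_eq_one (x : F) : tr4 x = 0 ∨ tr4 x = 1 :=
  eq_zero_or_one_of_sq_eq_self <| by
    unfold tr4; rw [CharTwo.add_sq]; linear_combination pow_four_two_two x

theorem exists_tr4_eq_one : ∃ z : F, tr4 z = 1 := by
  by_contra! h
  have hsub : (univ : Finset F) ⊆ {0, 1} := fun z _ => by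
    have hz : z ^ 2 = z :=
      (CharTwo.add_eq_zero.1 ((tr4_eq_zero_or_eq_one z).resolve_right (h z))).symm
    simpa using eq_zero_or_one_of_sq_eq_self hz
  have := (card_le_card hsub).trans card_le_two
  rw [card_univ, card_two_two] at this
  omega

theorem ne_zero_of_tr4_eq_one {x : F} (hx : tr4 x = 1) : x ≠ 0 := by
  rintro rfl
  simp [tr4] at hx

theorem tr4_eq_one_iff (x : F) : tr4 x = 1 ↔ x ^ 2 + x + 1 = 0 := by
  rw [← CharTwo.add_eq_zero, tr4, add_comm x]

theorem tr4_add_one (x : F) : tr4 (x + 1) = tr4 x := by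
  rw [tr4_add, add_eq_left, tr4, one_pow, CharTwo.add_self_eq_zero]

theorem eq_or_eq_add_one_of_tr4_eq_one {lam y : F} (hlam : lam ^ 2 + lam + 1 = 0)
    (hy : tr4 y = 1) : y = lam ∨ y = lam + 1 := by
  have h : (y + lam) * (y + (lam + 1)) = 0 := by
    linear_combination (tr4_eq_one_iff y).1 hy + hlam
      + (y * lam - 1) * (CharTwo.two_eq_zero : (2 : F) = 0)
  simpa only [mul_eq_zero, CharTwo.add_eq_zero] using h

noncomputable def trChar : AddChar F ℤ where
  toFun x := if tr4 x = 0 then 1 else -1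
  map_zero_eq_one' := by simp [tr4]
  map_add_eq_mul' x y := by
    rw [tr4_add]
    rcases tr4_eq_zero_or_eq_one x with hx | hx <;> rcases tr4_eq_zero_or_eq_one y with hy | hy <;>
      simp [hx, hy, CharTwo.add_self_eq_zero]

theorem trChar_apply (x : F) : trChar x = if tr4 x = 0 then 1 else -1 := rfl

theorem trChar_of_tr4_eq_one {x : F} (hx : tr4 x = 1) : trChar x = -1 := by
  simp [trChar_apply, hx]

theorem trChar_sq (x : F) : trChar (x ^ 2) = trChar x := by
  simp only [trChar_apply, tr4_sq]

theorem trChar_mul_sq (c s : F) : trChar (c * s ^ 2) = trChar (c ^ 2 * s) := by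
  simp only [trChar_apply, tr4_mul_sq]

theorem isPrimitive_trChar : trChar.IsPrimitive := by
  refine AddChar.IsPrimitive.of_ne_one (AddChar.ne_one_iff.2 ?_)
  obtain ⟨z, hz⟩ := exists_tr4_eq_one
  exact ⟨z, by simp [trChar_of_tr4_eq_one hz]⟩

theorem sum_trChar_mul (b : F) : ∑ c, trChar (c * b) = if b = 0 then 4 else 0 := by
  rw [AddChar.sum_mulShift b isPrimitive_trChar, card_two_two]
  push_cast; rfl

theorem sum_compl_trChar_mul {b : F} (hb : b ≠ 0) : ∑ c ∈ {0}ᶜ, trChar (c * b) = -1 := by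
  have h := sum_trChar_mul b
  rw [Fintype.sum_eq_add_sum_compl 0, zero_mul, AddChar.map_zero_eq_one, if_neg hb] at h
  linarith

theorem four_pow_eq_two_pow_mul_two_pow {n i j : ℕ} (h : i + j = 2 * n) :
    (4 : ℤ) ^ n = 2 ^ i * 2 ^ j := by
  rw [← pow_add, h, pow_mul]; norm_num

/-- Pairs up the coordinates `i` and `m + i` of a vector of length `2m`. -/
def splitEquiv (α : Type*) (m : ℕ) : (Fin (2 * m) → α) ≃ (Fin m → α × α) :=
  ((finCongr (two_mul m)).arrowCongr (Equiv.refl α)).trans <|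
    (finSumFinEquiv.symm.arrowCongr (Equiv.refl α)).trans <|
      (Equiv.sumArrowEquivProdArrow _ _ _).trans (Equiv.arrowProdEquivProdArrow _ _ _).symm

section Symplectic

variable {m : ℕ}

local notation "V" => Fin (2 * m) → F

theorem symp_eq_sum_splitEquiv (u v : V) :
    symp m u v = ∑ i, ((splitEquiv F m u i).1 * (splitEquiv F m v i).2 +
      (splitEquiv F m u i).2 * (splitEquiv F m v i).1) := rfl

theorem th0_eq_sum_splitEquiv (u : V) :
    th0 m u = ∑ i, (splitEquiv F m u i).1 * (splitEquiv F m u i).2 := rfl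

theorem symp_add_left (u v x : V) : symp m (u + v) x = symp m u x + symp m v x := by
  simp only [symp, ← sum_add_distrib, Pi.add_apply]
  exact sum_congr rfl fun i _ => by ring

theorem symp_add_right (u x y : V) : symp m u (x + y) = symp m u x + symp m u y := by
  simp only [symp, ← sum_add_distrib, Pi.add_apply]
  exact sum_congr rfl fun i _ => by ring

theorem symp_smul_left (c : F) (u x : V) : symp m (c • u) x = c * symp m u x := by
  simp only [symp, mul_sum, Pi.smul_apply, smul_eq_mul]
  exact sum_congr rfl fun i _ => by ring

theorem symp_smul_right (c : F) (u x : V) : symp m u (c • x) = c * symp m u x := by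
  simp only [symp, mul_sum, Pi.smul_apply, smul_eq_mul]
  exact sum_congr rfl fun i _ => by ring

theorem symp_comm (u v : V) : symp m u v = symp m v u := by
  simp only [symp]
  exact sum_congr rfl fun i _ => by ring

theorem symp_self (u : V) : symp m u u = 0 :=
  sum_eq_zero fun i _ => by rw [mul_comm]; exact CharTwo.add_self_eq_zero _

theorem symp_zero_left (x : V) : symp m 0 x = 0 := by
  simp [symp]

theorem th0_add (u v : V) : th0 m (u + v) = th0 m u + th0 m v + symp m u v := by
  simp only [th0, symp, ← sum_add_distrib, Pi.add_apply]
  exact sum_congr rfl fun i _ => by ring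

theorem th0_smul (c : F) (u : V) : th0 m (c • u) = c ^ 2 * th0 m u := by
  simp only [th0, mul_sum, Pi.smul_apply, smul_eq_mul]
  exact sum_congr rfl fun i _ => by ring

theorem th_zero (d : V) : th m d 0 = 0 := by
  simp [th, th0, symp]

theorem exists_symp_ne_zero {a : V} (ha : a ≠ 0) : ∃ x, symp m a x ≠ 0 := by
  by_contra! h
  refine ha ((splitEquiv F m).injective (funext fun i => ?_))
  have hsingle (p : F × F) :
      (splitEquiv F m a i).1 * p.2 + (splitEquiv F m a i).2 * p.1 = 0 := by
    have := h ((splitEquiv F m).symm (Pi.single i p))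
    rwa [symp_eq_sum_splitEquiv, Equiv.apply_symm_apply, Fintype.sum_eq_single i
      (fun j hj => by simp [Pi.single_eq_of_ne hj]), Pi.single_eq_same] at this
  show _ = (0 : F × F)
  exact Prod.ext (by simpa using hsingle (0, 1)) (by simpa using hsingle (1, 0))

theorem sum_trChar_symp {a : V} (ha : a ≠ 0) : ∑ x, trChar (symp m a x) = 0 := by
  obtain ⟨x, hx⟩ := exists_symp_ne_zero ha
  obtain ⟨z, hz⟩ := exists_tr4_eq_one
  let ψ := trChar.compAddMonoidHom (AddMonoidHom.mk' (symp m a) (symp_add_right a))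
  refine AddChar.sum_eq_zero_of_ne_one (ψ := ψ) (AddChar.ne_one_iff.2 ⟨(z / symp m a x) • x, ?_⟩)
  simp [ψ, symp_smul_right, div_mul_cancel₀ _ hx, trChar_of_tr4_eq_one hz]

theorem sum_trChar_mul_th0 {c : F} (hc : c ≠ 0) : ∑ x : V, trChar (c * th0 m x) = 4 ^ m := by
  have hpair : ∑ p : F × F, trChar (c * (p.1 * p.2)) = 4 := by
    simp_rw [Fintype.sum_prod_type, show ∀ u v : F, c * (u * v) = v * (c * u) from
      fun u v => by ring, sum_trChar_mul, mul_eq_zero, hc, false_or]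
    simp
  calc ∑ x : V, trChar (c * th0 m x)
      = ∑ g : Fin m → F × F, ∏ i, trChar (c * ((g i).1 * (g i).2)) := by
        rw [← (splitEquiv F m).sum_comp]
        simp_rw [th0_eq_sum_splitEquiv, mul_sum, AddChar.map_sum_eq_prod]
    _ = 4 ^ m := by
        rw [← Fintype.prod_sum (fun _ (p : F × F) => trChar (c * (p.1 * p.2)))]
        simp [hpair]

theorem sum_trChar_mul_th0_add_symp {c : F} (hc : c ≠ 0) (w : V) :
    ∑ x : V, trChar (c * th0 m x + symp m w x) = 4 ^ m * trChar (c⁻¹ * th0 m w) := by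
  have hsquare (x : V) :
      c * th0 m x + symp m w x = c⁻¹ * th0 m w + c * th0 m (x + c⁻¹ • w) := by
    rw [th0_add, th0_smul, symp_smul_right, symp_comm x w]
    linear_combination -(symp m w x + c⁻¹ * th0 m w) * mul_inv_cancel₀ hc
      - (c⁻¹ * th0 m w) * (CharTwo.two_eq_zero : (2 : F) = 0)
  simp_rw [hsquare, AddChar.map_add_eq_mul, ← mul_sum]
  rw [Fintype.sum_equiv (Equiv.addRight (c⁻¹ • w))
    (fun x => trChar (c * th0 m (x + c⁻¹ • w))) (fun x => trChar (c * th0 m x)) (fun _ => rfl),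
    sum_trChar_mul_th0 hc, mul_comm]

theorem sum_trChar_mul_th_add_symp {c : F} (hc : c ≠ 0) (d a : V) :
    ∑ x : V, trChar (c * th m d x + symp m a x)
      = 4 ^ m * trChar (th0 m d) * trChar (c ^ 2 * th m d a) := by
  have hlin (x : V) :
      trChar (c * th m d x + symp m a x) = trChar (c * th0 m x + symp m (c ^ 2 • d + a) x) := by
    rw [th, symp_add_left, symp_smul_left, mul_add, add_right_comm, AddChar.map_add_eq_mul,
      trChar_mul_sq, ← AddChar.map_add_eq_mul]
    ring_nf
  have hinv : c⁻¹ = c ^ 2 :=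
    inv_eq_of_mul_eq_one_right (by rw [← pow_succ', pow_three_two_two_of_ne_zero hc])
  have hval : c⁻¹ * th0 m (c ^ 2 • d + a) = th0 m d + c ^ 2 * th0 m a + c * symp m d a := by
    rw [th0_add, th0_smul, symp_smul_left, hinv]
    linear_combination ((c ^ 3 + 1) * th0 m d + c * symp m d a) * pow_three_two_two_of_ne_zero hc
  simp_rw [hlin]
  rw [sum_trChar_mul_th0_add_symp hc, hval, th, mul_add, show c ^ 2 * symp m d a ^ 2 =
    (c * symp m d a) ^ 2 by ring, AddChar.map_add_eq_mul, AddChar.map_add_eq_mul,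
    AddChar.map_add_eq_mul, trChar_sq]
  ring

theorem four_mul_sum_trChar_symp_filter_th_eq (d a : V) (μ : F) :
    4 * ∑ x ∈ univ.filter (fun x => th m d x = μ), trChar (symp m a x)
      = ∑ x, trChar (symp m a x)
        + 4 ^ m * trChar (th0 m d)
          * ∑ c ∈ {0}ᶜ, trChar (c * μ) * trChar (c ^ 2 * th m d a) := by
  have hfourier (x : V) : ∑ c, trChar (c * μ) * trChar (c * th m d x + symp m a x)
      = if th m d x = μ then 4 * trChar (symp m a x) else 0 := by
    simp_rw [← AddChar.map_add_eq_mul, show ∀ c, c * μ + (c * th m d x + symp m a x)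
      = c * (th m d x + μ) + symp m a x from fun c => by ring, AddChar.map_add_eq_mul,
      ← sum_mul, sum_trChar_mul, CharTwo.add_eq_zero]
    split_ifs <;> simp
  calc 4 * ∑ x ∈ univ.filter (fun x => th m d x = μ), trChar (symp m a x)
      = ∑ x, ∑ c, trChar (c * μ) * trChar (c * th m d x + symp m a x) := by
        rw [sum_filter, mul_sum]
        exact sum_congr rfl fun x _ => by rw [hfourier]; split_ifs <;> simp
    _ = ∑ c, trChar (c * μ) * ∑ x, trChar (c * th m d x + symp m a x) := by
        rw [sum_comm]; simp_rw [mul_sum]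
    _ = _ := by
        rw [Fintype.sum_eq_add_sum_compl 0, mul_sum (s := {0}ᶜ)]
        simp only [zero_mul, zero_add, AddChar.map_zero_eq_one, one_mul]
        refine congrArg _ (sum_congr rfl fun c hc => ?_)
        rw [sum_trChar_mul_th_add_symp (by simpa using hc)]
        ring

theorem four_mul_card_filter_th_eq (d : V) {μ : F} (hμ : μ ≠ 0) :
    4 * (#(univ.filter fun x => th m d x = μ) : ℤ) = 4 ^ (2 * m) - 4 ^ m * trChar (th0 m d) := by
  have h := four_mul_sum_trChar_symp_filter_th_eq d 0 μ
  simp only [symp_zero_left, th_zero, mul_zero, AddChar.map_zero_eq_one, mul_one,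
    sum_compl_trChar_mul hμ, sum_const, card_univ, Fintype.card_fun, card_two_two,
    Fintype.card_fin] at h
  linear_combination h

theorem four_mul_sum_trChar_symp_filter_th_eq_of_th_eq (d : V) {μ : F} (hμ : tr4 μ = 1)
    {a : V} (ha : th m d a = μ) :
    4 * ∑ x ∈ univ.filter (fun x => th m d x = μ), trChar (symp m a x)
      = -(4 ^ m * trChar (th0 m d)) := by
  have ha0 : a ≠ 0 := by
    rintro rfl
    exact ne_zero_of_tr4_eq_one hμ (by rw [← ha, th_zero])
  have hprod (c : F) : trChar (c * μ) * trChar (c ^ 2 * μ) = trChar (c * 1) := by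
    rw [mul_comm (c ^ 2), trChar_mul_sq, ← AddChar.map_add_eq_mul]
    have hμ' : μ + μ ^ 2 = 1 := hμ
    congr 1
    linear_combination c * hμ'
  rw [four_mul_sum_trChar_symp_filter_th_eq, sum_trChar_symp ha0, ha]
  simp_rw [hprod, sum_compl_trChar_mul one_ne_zero]
  ring

theorem eight_mul_card_filter_th_eq_and_tr4_symp_eq_zero (d : V) {μ : F} (hμ : tr4 μ = 1)
    {a : V} (ha : th m d a = μ) :
    8 * (#(univ.filter fun x => th m d x = μ ∧ tr4 (symp m a x) = 0) : ℤ)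
      = 4 ^ (2 * m) - 2 * 4 ^ m * trChar (th0 m d) := by
  have hhalf : 2 * (#(univ.filter fun x => th m d x = μ ∧ tr4 (symp m a x) = 0) : ℤ)
      = #(univ.filter fun x => th m d x = μ)
        + ∑ x ∈ univ.filter (fun x => th m d x = μ), trChar (symp m a x) := by
    rw [← filter_filter, card_filter, card_eq_sum_ones, Nat.cast_sum, Nat.cast_sum, mul_sum,
      ← sum_add_distrib]
    refine sum_congr rfl fun x _ => ?_
    rw [trChar_apply]
    split_ifs <;> norm_num
  linear_combination 4 * hhalf + four_mul_card_filter_th_eq d (ne_zero_of_tr4_eq_one hμ)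
    + four_mul_sum_trChar_symp_filter_th_eq_of_th_eq d hμ ha

theorem natCard_th_eq (hm : 1 ≤ m) (d : V) {μ : F} (hμ : tr4 μ = 1) :
    (Nat.card {x : V | tr4 (th m d x) = 1 ∧ th m d x = μ} : ℤ)
      = 2 ^ (4 * m - 2) - trChar (th0 m d) * 2 ^ (2 * m - 2) := by
  have hcard : Nat.card {x : V | tr4 (th m d x) = 1 ∧ th m d x = μ}
      = #(univ.filter fun x => th m d x = μ) := by
    rw [Nat.card_eq_fintype_card, Fintype.card_subtype]
    congr 1
    exact filter_congr fun x _ => ⟨fun h => h.2, fun h => ⟨h ▸ hμ, h⟩⟩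
  have h := four_mul_card_filter_th_eq d (ne_zero_of_tr4_eq_one hμ)
  rw [four_pow_eq_two_pow_mul_two_pow (i := 2) (j := 4 * m - 2) (by omega),
    four_pow_eq_two_pow_mul_two_pow (i := 2) (j := 2 * m - 2) (by omega)] at h
  rw [hcard]
  refine mul_left_cancel₀ (four_ne_zero : (4 : ℤ) ≠ 0) ?_
  linear_combination h

theorem natCard_neighbors_th_eq (hm : 1 ≤ m) (d : V) {μ : F} (hμ : tr4 μ = 1) {a : V}
    (ha : th m d a = μ) :
    (Nat.card {x : V // (tr4 (th m d x) = 1 ∧ th m d x = μ) ∧ x ≠ a ∧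
      tr4 (symp m a x) = 0} : ℤ)
      = 2 ^ (4 * m - 3) - trChar (th0 m d) * 2 ^ (2 * m - 2) - 1 := by
  have hmem : a ∈ univ.filter fun x => th m d x = μ ∧ tr4 (symp m a x) = 0 :=
    mem_filter.2 ⟨mem_univ a, ha, by simp [symp_self, tr4]⟩
  have hcard : Nat.card {x : V // (tr4 (th m d x) = 1 ∧ th m d x = μ) ∧ x ≠ a ∧
      tr4 (symp m a x) = 0}
      = #(univ.filter fun x => th m d x = μ ∧ tr4 (symp m a x) = 0) - 1 := by
    rw [Nat.card_eq_fintype_card, Fintype.card_subtype, ← card_erase_of_mem hmem]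
    congr 1
    ext x
    simp only [mem_filter, mem_univ, true_and, mem_erase]
    exact ⟨fun ⟨⟨_, h⟩, hxa, hx⟩ => ⟨hxa, h, hx⟩,
      fun ⟨hxa, h, hx⟩ => ⟨⟨h ▸ hμ, h⟩, hxa, hx⟩⟩
  have h := eight_mul_card_filter_th_eq_and_tr4_symp_eq_zero d hμ ha
  rw [four_pow_eq_two_pow_mul_two_pow (i := 3) (j := 4 * m - 3) (by omega),
    four_pow_eq_two_pow_mul_two_pow (i := 2) (j := 2 * m - 2) (by omega)] at h
  rw [hcard, Nat.cast_sub (card_pos.2 ⟨a, hmem⟩), Nat.cast_one]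
  refine mul_left_cancel₀ (by norm_num : (8 : ℤ) ≠ 0) ?_
  linear_combination h

end Symplectic

open scoped Classical in
/-- The switching sets between `NO^±(4m,2)` and `NO^∓(2m+1,4)`:
`A = {ϑ_d = λ}` and `B = {ϑ_d = λ+1}` partition the common vertex set
`V' = {x : Tr(ϑ_d(x)) = 1}`, have size `2^{4m-2} - ε 2^{2m-2}`, and in the graph
`NO^±(4m,2)` (distinct `a, b` adjacent iff `Tr⟨a,b⟩ = 0`) each is regular of degree
`2^{4m-3} - ε 2^{2m-2} - 1`. -/
theorem stmt_15 (m : ℕ) (hm : 1 ≤ m) (d : Fin (2*m) → GaloisField 2 2)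
    (lam : GaloisField 2 2) (hlam : lam^2 + lam + 1 = 0) :
    let ε : ℤ := if tr4 (th0 m d) = 0 then 1 else -1
    let V' : Set (Fin (2*m) → GaloisField 2 2) := {x | tr4 (th m d x) = 1}
    let A : Set (Fin (2*m) → GaloisField 2 2) := {x | tr4 (th m d x) = 1 ∧ th m d x = lam}
    let B : Set (Fin (2*m) → GaloisField 2 2) := {x | tr4 (th m d x) = 1 ∧ th m d x = lam + 1}
    -- `A` and `B` partition `V'`
    (A ∪ B = V' ∧ A ∩ B = ∅)
    -- sizes
    ∧ (Nat.card A : ℤ) = 2^(4*m - 2) - ε * 2^(2*m - 2)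
    ∧ (Nat.card B : ℤ) = 2^(4*m - 2) - ε * 2^(2*m - 2)
    -- each switching set is regular of degree `2^{4m-3} - ε 2^{2m-2} - 1` in `NO^±(4m,2)`
    ∧ (∀ a ∈ A, (Nat.card {x : Fin (2*m) → GaloisField 2 2 //
          x ∈ A ∧ x ≠ a ∧ tr4 (symp m a x) = 0} : ℤ) = 2^(4*m - 3) - ε * 2^(2*m - 2) - 1)
    ∧ (∀ b ∈ B, (Nat.card {x : Fin (2*m) → GaloisField 2 2 //
          x ∈ B ∧ x ≠ b ∧ tr4 (symp m b x) = 0} : ℤ) = 2^(4*m - 3) - ε * 2^(2*m - 2) - 1) := by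
  intro ε V' A B
  have hlam₁ : tr4 lam = 1 := (tr4_eq_one_iff lam).2 hlam
  have hlam₂ : tr4 (lam + 1) = 1 := by rw [tr4_add_one, hlam₁]
  refine ⟨⟨?_, ?_⟩, natCard_th_eq hm d hlam₁, natCard_th_eq hm d hlam₂,
    fun a ha => natCard_neighbors_th_eq hm d hlam₁ ha.2,
    fun b hb => natCard_neighbors_th_eq hm d hlam₂ hb.2⟩
  · ext x
    simp only [A, B, V', Set.mem_union, Set.mem_ofPred_eq, ← and_or_left, and_iff_left_iff_imp]
    exact eq_or_eq_add_one_of_tr4_eq_one hlam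
  · ext x
    simp only [A, B, Set.mem_inter_iff, Set.mem_ofPred_eq, Set.mem_empty_iff_false, iff_false]
    rintro ⟨⟨-, hx⟩, -, hx'⟩
    exact absurd (hx.symm.trans hx') (by simp)
end
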